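/- arXiv:1709.03801 — 2 statements merged into one kernel-verified Lean document; each statement's English description precedes it below -/
import Mathlib

section
/- Let A be a synaptic algebra and let q, r be projections in A (q = q², r = r²). Then q ≤ r if and only if q ≤ₛ r, where ≤ₛ is the spectral order. -/
open Filter Topology

/-- The order-unit norm associated with an order relation `le` on a real algebra:
`‖a‖ = inf {λ > 0 : −λ ≤ a ≤ λ}`. -/
noncomputable def ouNorm {R : Type*} [Ring R] [Algebra ℝ R] (le : R → R → Prop) (a : R) : ℝ :=
  sInf {l : ℝ | 0 < l ∧ le (algebraMap ℝ R (-l)) a ∧ le a (algebraMap ℝ R l)}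

/-- A synaptic algebra: a real linear subspace `A` (containing `1`) of a unital associative
algebra `R` over `ℝ` (a complex algebra is in particular a real algebra), equipped with a
partial order making it an Archimedean partially ordered real linear space with order unit `1`,
and satisfying axioms SA1–SA8.  The square root (SA5) and the carrier (SA6) are bundled as
data together with their defining properties. -/
structure SynapticAlgebra (R : Type*) [Ring R] [Algebra ℝ R] where
  A : Submodule ℝ R
  one_mem : (1 : R) ∈ A
  /-- the synaptic order (meaningful on elements of `A`) -/
  le : R → R → Prop
  -- SA1 : Archimedean partially ordered real linear space with order unit 1
  le_refl : ∀ a ∈ A, le a a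
  le_antisymm : ∀ a ∈ A, ∀ b ∈ A, le a b → le b a → a = b
  le_trans : ∀ a ∈ A, ∀ b ∈ A, ∀ c ∈ A, le a b → le b c → le a c
  add_le_add_right : ∀ a ∈ A, ∀ b ∈ A, ∀ c ∈ A, le a b → le (a + c) (b + c)
  smul_nonneg : ∀ r : ℝ, 0 ≤ r → ∀ a ∈ A, le 0 a → le 0 (r • a)
  arch : ∀ a ∈ A, ∀ b ∈ A, (∀ n : ℕ, le ((n : ℝ) • a) b) → le a 0
  one_order_unit : ∀ a ∈ A, ∃ n : ℕ, le a ((n : ℝ) • (1 : R))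
  zero_ne_one : (0 : R) ≠ 1
  -- SA2
  sq_mem : ∀ a ∈ A, a * a ∈ A
  sq_nn : ∀ a ∈ A, le 0 (a * a)
  -- SA3
  quad_mem : ∀ a ∈ A, ∀ b ∈ A, a * b * a ∈ A
  quad_nn : ∀ a ∈ A, ∀ b ∈ A, le 0 a → le 0 b → le 0 (a * b * a)
  -- SA4
  quad_zero : ∀ a ∈ A, ∀ b ∈ A, le 0 b → a * b * a = 0 → a * b = 0 ∧ b * a = 0
  -- SA5 : square roots
  sqrt : R → R
  sqrt_mem : ∀ a ∈ A, le 0 a → sqrt a ∈ A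
  sqrt_nn : ∀ a ∈ A, le 0 a → le 0 (sqrt a)
  sqrt_sq : ∀ a ∈ A, le 0 a → sqrt a * sqrt a = a
  sqrt_bicomm : ∀ a ∈ A, le 0 a → ∀ b ∈ A, a * b = b * a → sqrt a * b = b * sqrt a
  sqrt_unique : ∀ a ∈ A, le 0 a → ∀ b ∈ A, le 0 b → b * b = a →
    (∀ c ∈ A, a * c = c * a → b * c = c * b) → b = sqrt a
  -- SA6 : carriers
  carr : R → R
  carr_mem : ∀ a ∈ A, carr a ∈ A
  carr_idem : ∀ a ∈ A, carr a * carr a = carr a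
  carr_spec : ∀ a ∈ A, ∀ b ∈ A, (a * b = 0 ↔ carr a * b = 0)
  -- SA7
  inv_exists : ∀ a ∈ A, le 1 a → ∃ b ∈ A, a * b = 1 ∧ b * a = 1
  -- SA8
  comm_closed : ∀ a ∈ A, ∀ b ∈ A, ∀ f : ℕ → R, (∀ n, f n ∈ A) →
    (∀ n, le (f n) (f (n + 1))) → (∀ m n, f m * f n = f n * f m) →
    (∀ n, f n * b = b * f n) →
    Filter.Tendsto (fun n => ouNorm le (a - f n)) Filter.atTop (nhds 0) →
    a * b = b * a

namespace SynapticAlgebra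

variable {R : Type*} [Ring R] [Algebra ℝ R] (S : SynapticAlgebra R)

/-- `|a| := (a²)^{1/2}`. -/
def absval (a : R) : R := S.sqrt (a * a)

/-- The positive part `a⁺ := (|a| + a)/2`. -/
noncomputable def pospart (a : R) : R := (2⁻¹ : ℝ) • (S.absval a + a)

/-- The spectral resolution `p_{a,λ} := 1 − ((a − λ)⁺)°`. -/
noncomputable def specProj (a : R) (l : ℝ) : R :=
  1 - S.carr (S.pospart (a - algebraMap ℝ R l))

/-- The spectral order: `a ≤ₛ b` iff `p_{b,λ} ≤ p_{a,λ}` for all real `λ`. -/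
noncomputable def specLE (a b : R) : Prop :=
  ∀ l : ℝ, S.le (S.specProj b l) (S.specProj a l)

/-- Projections of the synaptic algebra. -/
def IsProj (p : R) : Prop := p ∈ S.A ∧ p * p = p

/-- The set `E = {e ∈ A : 0 ≤ e ≤ 1}` of effects. -/
def effects : Set R := {e | e ∈ S.A ∧ S.le 0 e ∧ S.le e 1}

/-- `p` is the infimum of the set `T` in the orthomodular lattice `P` of projections. -/
def IsProjInf (p : R) (T : Set R) : Prop :=
  S.IsProj p ∧ (∀ q ∈ T, S.le p q) ∧ ∀ r, S.IsProj r → (∀ q ∈ T, S.le r q) → S.le r p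

/-- `p` is the supremum of the set `T` in the orthomodular lattice `P` of projections. -/
def IsProjSup (p : R) (T : Set R) : Prop :=
  S.IsProj p ∧ (∀ q ∈ T, S.le q p) ∧ ∀ r, S.IsProj r → (∀ q ∈ T, S.le q r) → S.le p r

/-- A Banach (norm-complete) synaptic algebra: every Cauchy sequence in `A`
(w.r.t. the order-unit norm) converges in norm to an element of `A`. -/
noncomputable def IsBanach : Prop :=
  ∀ f : ℕ → R, (∀ n, f n ∈ S.A) →
    (∀ ε : ℝ, 0 < ε → ∃ N : ℕ, ∀ m ≥ N, ∀ n ≥ N, ouNorm S.le (f m - f n) < ε) →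
    ∃ a ∈ S.A, Filter.Tendsto (fun n => ouNorm S.le (a - f n)) Filter.atTop (nhds 0)

/-- The `λ`-eigenprojection `d_{a,λ} := 1 − (a − λ)°`. -/
noncomputable def eigenProj (a : R) (l : ℝ) : R := 1 - S.carr (a - algebraMap ℝ R l)

/-- The bicommutant `CC(a)` (within `A`). -/
def Bicomm (a : R) : Set R :=
  {b | b ∈ S.A ∧ ∀ c ∈ S.A, a * c = c * a → b * c = c * b}

/-- Projections `p` and `q` are exchanged by a symmetry (`s² = 1`, `sps = q`). -/
def ExchBySymm (p q : R) : Prop := ∃ s ∈ S.A, s * s = 1 ∧ s * p * s = q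

/-- The dimension equivalence on projections: a finite chain of projections, consecutive
ones exchanged by symmetries. -/
def DimEquiv (p q : R) : Prop :=
  ∃ (n : ℕ) (c : ℕ → R), c 0 = p ∧ c n = q ∧ (∀ i ≤ n, S.IsProj (c i)) ∧
    ∀ i < n, S.ExchBySymm (c i) (c (i + 1))

/-- `A` is of finite type iff every projection is finite. -/
def FiniteType : Prop :=
  ∀ p, S.IsProj p → ∀ q, S.IsProj q → S.DimEquiv q p → S.le q p → q = p

/-- The projection lattice `P` is a complete orthomodular lattice: every set of projections
has an infimum and a supremum in `P`. -/
def ProjComplete : Prop :=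
  ∀ T : Set R, (∀ p ∈ T, S.IsProj p) →
    (∃ q, S.IsProjInf q T) ∧ (∃ q, S.IsProjSup q T)

/-- A bounded resolution of identity with bound `K`. -/
def IsBoundedResId (p : ℝ → R) (K : ℝ) : Prop :=
  0 ≤ K ∧ (∀ l, S.IsProj (p l)) ∧
  (∀ l, l < -K → p l = 0) ∧ (∀ l, K ≤ l → p l = 1) ∧
  (∀ l l', l ≤ l' → S.le (p l) (p l')) ∧
  (∀ l, S.IsProjInf (p l) {x | ∃ l' > l, x = p l'})

end SynapticAlgebra

/-- `c` is a regular involution on the subset `T` of the poset `(T, le')`. -/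
def IsRegInvPoset {R : Type*} (le' : R → R → Prop) (T : Set R) (c : R → R) : Prop :=
  (∀ a ∈ T, c a ∈ T) ∧ (∀ a ∈ T, c (c a) = a) ∧
  (∀ a ∈ T, ∀ b ∈ T, le' a b → le' (c b) (c a)) ∧
  (∀ a ∈ T, ∀ b ∈ T, le' a (c a) → le' b (c b) → le' a (c b))

/-- `(T, le', c, 0, 1)` is a Kleene poset: a bounded poset with a regular involution. -/
def IsKleene {R : Type*} [Zero R] [One R] (le' : R → R → Prop) (T : Set R) (c : R → R) : Prop :=
  IsRegInvPoset le' T c ∧ (0 : R) ∈ T ∧ (1 : R) ∈ T ∧ ∀ a ∈ T, le' 0 a ∧ le' a 1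

/-- Every pair of elements of `T` has an infimum and a supremum in `(T, le')`. -/
def HasBinSupInf {R : Type*} (le' : R → R → Prop) (T : Set R) : Prop :=
  ∀ a ∈ T, ∀ b ∈ T,
    (∃ m ∈ T, le' m a ∧ le' m b ∧ ∀ x ∈ T, le' x a → le' x b → le' x m) ∧
    (∃ j ∈ T, le' a j ∧ le' b j ∧ ∀ x ∈ T, le' a x → le' b x → le' j x)

/-
A projection `p` has spectrum in `{0, 1}`: writing `p - λ = (1 - λ) p + (-λ) (1 - p)`, its positive
part is `(1 - λ)⁺ p + (-λ)⁺ (1 - p)`, and the carrier of such a combination is read off from which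
coefficients vanish. Hence `p_{p,λ}` is `0` for `λ < 0`, `1 - p` for `0 ≤ λ < 1` and `1` for
`1 ≤ λ`, so the spectral order on projections is the usual order on their orthocomplements.
-/

namespace SynapticAlgebra

variable {R : Type*} [Ring R] [Algebra ℝ R] (S : SynapticAlgebra R)

lemma zero_le_one : S.le 0 1 := by
  simpa using S.sq_nn 1 S.one_mem

lemma add_nonneg {a b : R} (ha : a ∈ S.A) (hb : b ∈ S.A) (h0a : S.le 0 a) (h0b : S.le 0 b) :
    S.le 0 (a + b) := by
  have hab := S.add_le_add_right 0 S.A.zero_mem a ha b hb h0a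
  rw [zero_add] at hab
  exact S.le_trans 0 S.A.zero_mem b hb (a + b) (S.A.add_mem ha hb) h0b hab

lemma sub_le_sub_left_iff {a b c : R} (ha : a ∈ S.A) (hb : b ∈ S.A) (hc : c ∈ S.A) :
    S.le (c - b) (c - a) ↔ S.le a b := by
  constructor
  · intro h
    have h' := S.add_le_add_right _ (S.A.sub_mem hc hb) _ (S.A.sub_mem hc ha) (a + b - c)
      (S.A.sub_mem (S.A.add_mem ha hb) hc) h
    rwa [show c - b + (a + b - c) = a by abel, show c - a + (a + b - c) = b by abel] at h'
  · intro h
    have h' := S.add_le_add_right a ha b hb (c - a - b)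
      (S.A.sub_mem (S.A.sub_mem hc ha) hb) h
    rwa [show a + (c - a - b) = c - b by abel, show b + (c - a - b) = c - a by abel] at h'

lemma eq_zero_of_mul_self_eq_zero {x : R} (hx : x ∈ S.A) (h : x * x = 0) : x = 0 := by
  simpa using (S.quad_zero x hx 1 S.one_mem S.zero_le_one (by simpa using h)).1

namespace IsProj

variable {S} {p : R}

lemma nonneg (hp : S.IsProj p) : S.le 0 p := by
  simpa [hp.2] using S.sq_nn p hp.1

lemma one_sub (hp : S.IsProj p) : S.IsProj (1 - p) := by
  refine ⟨S.A.sub_mem S.one_mem hp.1, ?_⟩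
  rw [mul_sub, sub_mul, sub_mul, hp.2]
  simp

lemma smul_add_smul_one_sub_mem (hp : S.IsProj p) (α β : ℝ) : α • p + β • (1 - p) ∈ S.A :=
  S.A.add_mem (S.A.smul_mem α hp.1) (S.A.smul_mem β hp.one_sub.1)

lemma smul_add_smul_one_sub_mul (hp : S.IsProj p) (α β γ δ : ℝ) :
    (α • p + β • (1 - p)) * (γ • p + δ • (1 - p)) = (α * γ) • p + (β * δ) • (1 - p) := by
  simp only [add_mul, mul_add, sub_mul, mul_sub, smul_mul_assoc, mul_smul_comm, one_mul,
    mul_one, hp.2]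
  module

end IsProj

lemma carr_eq_of_mul_eq_zero_iff {a e : R} (ha : a ∈ S.A) (he : S.IsProj e)
    (h : ∀ b ∈ S.A, a * b = 0 ↔ e * b = 0) : S.carr a = e := by
  set c := S.carr a
  have hcA : c ∈ S.A := S.carr_mem a ha
  have hcc : c * c = c := S.carr_idem a ha
  have hspec : ∀ b ∈ S.A, c * b = 0 ↔ e * b = 0 := fun b hb =>
    (S.carr_spec a ha b hb).symm.trans (h b hb)
  have hce : c * e = c := by
    have := (hspec _ he.one_sub.1).2 (by rw [mul_sub, mul_one, he.2, sub_self])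
    rwa [mul_sub, mul_one, sub_eq_zero, eq_comm] at this
  have hec : e * c = e := by
    have := (hspec _ (S.A.sub_mem S.one_mem hcA)).1 (by rw [mul_sub, mul_one, hcc, sub_self])
    rwa [mul_sub, mul_one, sub_eq_zero, eq_comm] at this
  have hsq : (c - e) * (c - e) = 0 := by
    rw [sub_mul, mul_sub, mul_sub, hcc, hce, hec, he.2]
    abel
  exact sub_eq_zero.1 (S.eq_zero_of_mul_self_eq_zero (S.A.sub_mem hcA he.1) hsq)

lemma carr_zero : S.carr 0 = 0 :=
  S.carr_eq_of_mul_eq_zero_iff S.A.zero_mem ⟨S.A.zero_mem, mul_zero 0⟩ fun _ _ => Iff.rfl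

lemma carr_eq_one_of_mul_eq_one {x y : R} (hx : x ∈ S.A) (hyx : y * x = 1) : S.carr x = 1 := by
  refine S.carr_eq_of_mul_eq_zero_iff hx ⟨S.one_mem, one_mul 1⟩ fun b _ => ?_
  rw [one_mul]
  refine ⟨fun h => ?_, fun h => by rw [h, mul_zero]⟩
  rw [← one_mul b, ← hyx, mul_assoc, h, mul_zero]

lemma carr_smul_of_isProj {p : R} (hp : S.IsProj p) {μ : ℝ} (hμ : μ ≠ 0) :
    S.carr (μ • p) = p :=
  S.carr_eq_of_mul_eq_zero_iff (S.A.smul_mem μ hp.1) hp fun b _ => by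
    rw [smul_mul_assoc, smul_eq_zero, or_iff_right hμ]

lemma absval_smul_add_smul_one_sub {p : R} (hp : S.IsProj p) (α β : ℝ) :
    S.absval (α • p + β • (1 - p)) = |α| • p + |β| • (1 - p) := by
  set x := α • p + β • (1 - p)
  have hxx : x * x = (α * α) • p + (β * β) • (1 - p) := hp.smul_add_smul_one_sub_mul α β α β
  have hb_nonneg : S.le 0 (|α| • p + |β| • (1 - p)) :=
    S.add_nonneg (S.A.smul_mem _ hp.1) (S.A.smul_mem _ hp.one_sub.1)
      (S.smul_nonneg _ (abs_nonneg α) p hp.1 hp.nonneg)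
      (S.smul_nonneg _ (abs_nonneg β) _ hp.one_sub.1 hp.one_sub.nonneg)
  have hbb : (|α| • p + |β| • (1 - p)) * (|α| • p + |β| • (1 - p)) = x * x := by
    rw [hp.smul_add_smul_one_sub_mul, abs_mul_abs_self, abs_mul_abs_self, hxx]
  refine (S.sqrt_unique (x * x) (S.sq_mem x (hp.smul_add_smul_one_sub_mem α β))
    (S.sq_nn x (hp.smul_add_smul_one_sub_mem α β)) _ (hp.smul_add_smul_one_sub_mem _ _)
    hb_nonneg hbb fun c _ hc => ?_).symm
  change Commute _ c
  by_cases hαβ : |α| = |β|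
  · rw [hαβ, ← smul_add, add_sub_cancel]
    exact (Commute.one_left c).smul_left _
  -- `x * x = β² + (α² - β²) p` with `α² ≠ β²`, so whatever commutes with `x * x` commutes with `p`.
  have hne : α * α - β * β ≠ 0 := by
    rwa [sub_ne_zero, Ne, mul_self_eq_mul_self_iff, ← abs_eq_abs]
  have hpc : Commute p c := by
    have h := Commute.sub_left (a := x * x) hc ((Commute.one_left c).smul_left (β * β))
    rw [hxx, show (α * α) • p + (β * β) • (1 - p) - (β * β) • (1 : R)
      = (α * α - β * β) • p by module] at h
    simpa [inv_smul_smul₀ hne] using h.smul_left (α * α - β * β)⁻¹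
  exact (hpc.smul_left _).add_left (((Commute.one_left c).sub_left hpc).smul_left _)

lemma pospart_smul_add_smul_one_sub {p : R} (hp : S.IsProj p) (α β : ℝ) :
    S.pospart (α • p + β • (1 - p)) = max α 0 • p + max β 0 • (1 - p) := by
  have h_pos (t : ℝ) : (2⁻¹ : ℝ) * (|t| + t) = max t 0 := by
    rcases le_total 0 t with ht | ht
    · rw [abs_of_nonneg ht, max_eq_left ht]; ring
    · rw [abs_of_nonpos ht, max_eq_right ht]; ring
  rw [pospart, S.absval_smul_add_smul_one_sub hp, ← h_pos, ← h_pos]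
  module

lemma specProj_of_isProj {p : R} (hp : S.IsProj p) (l : ℝ) :
    S.specProj p l = if l < 0 then 0 else if l < 1 then 1 - p else 1 := by
  have hdecomp : p - algebraMap ℝ R l = (1 - l) • p + (-l) • (1 - p) := by
    rw [Algebra.algebraMap_eq_smul_one]
    module
  rw [specProj, hdecomp, S.pospart_smul_add_smul_one_sub hp]
  split_ifs with hl0 hl1
  · rw [max_eq_left (by linarith), max_eq_left (by linarith),
      S.carr_eq_one_of_mul_eq_one (hp.smul_add_smul_one_sub_mem _ _)
        (y := (1 - l)⁻¹ • p + (-l)⁻¹ • (1 - p)), sub_self]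
    rw [hp.smul_add_smul_one_sub_mul, inv_mul_cancel₀ (by linarith),
      inv_mul_cancel₀ (by linarith)]
    module
  · rw [max_eq_left (by linarith), max_eq_right (by linarith), zero_smul, add_zero,
      S.carr_smul_of_isProj hp (by linarith)]
  · rw [max_eq_right (by linarith), max_eq_right (by linarith), zero_smul, zero_smul,
      add_zero, carr_zero, sub_zero]

end SynapticAlgebra

/-- For projections `q, r`, `q ≤ r` iff `q ≤ₛ r`. -/
theorem proj_le_iff_specLE {R : Type*} [Ring R] [Algebra ℝ R]
    (S : SynapticAlgebra R) (q r : R) (hq : S.IsProj q) (hr : S.IsProj r) :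
    S.le q r ↔ S.specLE q r := by
  have hcompl : S.le (1 - r) (1 - q) ↔ S.le q r := S.sub_le_sub_left_iff hq.1 hr.1 S.one_mem
  constructor
  · intro h l
    rw [S.specProj_of_isProj hq, S.specProj_of_isProj hr]
    split_ifs
    · exact S.le_refl 0 S.A.zero_mem
    · exact hcompl.2 h
    · exact S.le_refl 1 S.one_mem
  · intro h
    simpa [S.specProj_of_isProj hq, S.specProj_of_isProj hr, hcompl] using h 0
end

section
/- Let A be a synaptic algebra and let a, b ∈ A commute (ab = ba) with a ≤ b. Then a⁺ ≤ b⁺, where a⁺ := (|a| + a)/2 is the positive part. -/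
open Filter Topology

section AuxProof

namespace SynapticAlgebra

variable {R : Type*} [Ring R] [Algebra ℝ R] (S : SynapticAlgebra R)

private lemma comm_mul'' {x y z : R} (hxz : x * z = z * x) (hyz : y * z = z * y) :
    (x * y) * z = z * (x * y) := by
  rw [mul_assoc, hyz, ← mul_assoc, hxz, mul_assoc]

lemma le_of_sub' {x y : R} (hx : x ∈ S.A) (hy : y ∈ S.A) (h : S.le 0 (y - x)) :
    S.le x y := by
  have h' := S.add_le_add_right 0 S.A.zero_mem (y - x) (S.A.sub_mem hy hx) x hx h
  simpa using h'

lemma sub_of_le' {x y : R} (hx : x ∈ S.A) (hy : y ∈ S.A) (h : S.le x y) :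
    S.le 0 (y - x) := by
  have h' := S.add_le_add_right x hx y hy (-x) (S.A.neg_mem hx) h
  simpa [← sub_eq_add_neg] using h'

lemma neg_nonpos' {x : R} (hx : x ∈ S.A) (h : S.le 0 x) : S.le (-x) 0 := by
  apply S.le_of_sub' (S.A.neg_mem hx) S.A.zero_mem
  rwa [zero_sub, neg_neg]

lemma nonpos_of_neg_nonneg' {x : R} (hx : x ∈ S.A) (h : S.le 0 (-x)) : S.le x 0 := by
  apply S.le_of_sub' hx S.A.zero_mem
  rwa [zero_sub]

lemma add_nonneg' {x y : R} (hx : x ∈ S.A) (hy : y ∈ S.A)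
    (h1 : S.le 0 x) (h2 : S.le 0 y) : S.le 0 (x + y) := by
  have h' := S.add_le_add_right 0 S.A.zero_mem x hx y hy h1
  rw [zero_add] at h'
  exact S.le_trans 0 S.A.zero_mem y hy (x + y) (S.A.add_mem hx hy) h2 h'

lemma nonneg_antisymm' {x : R} (hx : x ∈ S.A) (h1 : S.le 0 x) (h2 : S.le x 0) : x = 0 :=
  S.le_antisymm x hx 0 S.A.zero_mem h2 h1

lemma one_nn : S.le 0 (1 : R) := by
  have h := S.sq_nn 1 S.one_mem
  rwa [mul_one] at h

lemma mul_mem_comm' {u v : R} (hu : u ∈ S.A) (hv : v ∈ S.A) (h : u * v = v * u) :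
    u * v ∈ S.A := by
  have key : u * v = (2⁻¹ : ℝ) • ((u + v) * (u + v) - u * u - v * v) := by
    have e : (u + v) * (u + v) - u * u - v * v = u * v + v * u := by noncomm_ring
    rw [e, ← h, ← two_smul ℝ (u * v), smul_smul]
    norm_num
  rw [key]
  exact S.A.smul_mem _ (S.A.sub_mem (S.A.sub_mem (S.sq_mem _ (S.A.add_mem hu hv))
    (S.sq_mem _ hu)) (S.sq_mem _ hv))

lemma mul_nonneg_comm' {u v : R} (hu : u ∈ S.A) (hv : v ∈ S.A)
    (h0u : S.le 0 u) (h0v : S.le 0 v) (h : u * v = v * u) : S.le 0 (u * v) := by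
  have hcm : S.sqrt u ∈ S.A := S.sqrt_mem u hu h0u
  have hc0 : S.le 0 (S.sqrt u) := S.sqrt_nn u hu h0u
  have hcc : S.sqrt u * S.sqrt u = u := S.sqrt_sq u hu h0u
  have hcv : S.sqrt u * v = v * S.sqrt u := S.sqrt_bicomm u hu h0u v hv h
  have hq := S.quad_nn (S.sqrt u) hcm v hv hc0 h0v
  have e : S.sqrt u * v * S.sqrt u = u * v := by
    rw [hcv, mul_assoc, hcc, ← h]
  rwa [e] at hq

lemma abs_mem' {u : R} (hu : u ∈ S.A) : S.sqrt (u * u) ∈ S.A :=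
  S.sqrt_mem _ (S.sq_mem u hu) (S.sq_nn u hu)

lemma abs_nn' {u : R} (hu : u ∈ S.A) : S.le 0 (S.sqrt (u * u)) :=
  S.sqrt_nn _ (S.sq_mem u hu) (S.sq_nn u hu)

lemma abs_sq' {u : R} (hu : u ∈ S.A) : S.sqrt (u * u) * S.sqrt (u * u) = u * u :=
  S.sqrt_sq _ (S.sq_mem u hu) (S.sq_nn u hu)

lemma abs_comm' {u c : R} (hu : u ∈ S.A) (hc : c ∈ S.A) (h : u * c = c * u) :
    S.sqrt (u * u) * c = c * S.sqrt (u * u) := by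
  apply S.sqrt_bicomm _ (S.sq_mem u hu) (S.sq_nn u hu) c hc
  rw [mul_assoc, h, ← mul_assoc, h, mul_assoc]

/-- If `x y = 0` and `x + y ≥ 0` then `x ≥ 0` (via the carrier of `x`). -/
lemma nonneg_of_mul_eq_zero' {x y : R} (hx : x ∈ S.A) (hy : y ∈ S.A)
    (hxy : x * y = 0) (h : S.le 0 (x + y)) : S.le 0 x := by
  have hp : S.carr x ∈ S.A := S.carr_mem x hx
  have hpp : S.carr x * S.carr x = S.carr x := S.carr_idem x hx
  have hp0 : S.le 0 (S.carr x) := by have := S.sq_nn (S.carr x) hp; rwa [hpp] at this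
  have h1pm : (1 : R) - S.carr x ∈ S.A := S.A.sub_mem S.one_mem hp
  have hp1p : S.carr x * (1 - S.carr x) = 0 := by rw [mul_sub, mul_one, hpp, sub_self]
  have hx1p : x * (1 - S.carr x) = 0 := (S.carr_spec x hx (1 - S.carr x) h1pm).2 hp1p
  have hxp : x * S.carr x = x := by
    have e : x * (1 - S.carr x) = x - x * S.carr x := by rw [mul_sub, mul_one]
    rw [e] at hx1p
    exact (sub_eq_zero.mp hx1p).symm
  have h1p0 : S.le 0 ((1 : R) - S.carr x) := by
    have e : ((1 : R) - S.carr x) * (1 - S.carr x) = 1 - S.carr x := by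
      rw [sub_mul, one_mul, mul_sub, mul_one, hpp]; abel
    have := S.sq_nn (1 - S.carr x) h1pm
    rwa [e] at this
  have hpx : S.carr x * x = x := by
    have h2 : x * (1 - S.carr x) * x = 0 := by rw [hx1p, zero_mul]
    obtain ⟨-, h3⟩ := S.quad_zero x hx (1 - S.carr x) h1pm h1p0 h2
    have e : (1 - S.carr x) * x = x - S.carr x * x := by rw [sub_mul, one_mul]
    rw [e] at h3
    exact (sub_eq_zero.mp h3).symm
  have hpy : S.carr x * y = 0 := (S.carr_spec x hx y hy).1 hxy
  have hq := S.quad_nn (S.carr x) hp (x + y) (S.A.add_mem hx hy) hp0 h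
  have e : S.carr x * (x + y) * S.carr x = x := by
    rw [mul_add, hpx, hpy, add_zero, hxp]
  rwa [e] at hq

lemma abs_sub_nonneg' {u : R} (hu : u ∈ S.A) : S.le 0 (S.sqrt (u * u) - u) := by
  have hrm : S.sqrt (u * u) ∈ S.A := S.abs_mem' hu
  have hr0 : S.le 0 (S.sqrt (u * u)) := S.abs_nn' hu
  have hrsq := S.abs_sq' hu
  have hru := S.abs_comm' hu hu rfl
  set r := S.sqrt (u * u) with hr
  have hmul : (r - u) * (r + u) = 0 := by
    have e : (r - u) * (r + u) = r * r - u * u + (r * u - u * r) := by noncomm_ring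
    rw [e, hrsq, hru]; abel
  have hsum : S.le 0 ((r - u) + (r + u)) := by
    have e : (r - u) + (r + u) = r + r := by abel
    rw [e]; exact S.add_nonneg' hrm hrm hr0 hr0
  exact S.nonneg_of_mul_eq_zero' (S.A.sub_mem hrm hu) (S.A.add_mem hrm hu) hmul hsum

lemma abs_add_nonneg' {u : R} (hu : u ∈ S.A) : S.le 0 (S.sqrt (u * u) + u) := by
  have hrm : S.sqrt (u * u) ∈ S.A := S.abs_mem' hu
  have hr0 : S.le 0 (S.sqrt (u * u)) := S.abs_nn' hu
  have hrsq := S.abs_sq' hu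
  have hru := S.abs_comm' hu hu rfl
  set r := S.sqrt (u * u) with hr
  have hmul : (r + u) * (r - u) = 0 := by
    have e : (r + u) * (r - u) = r * r - u * u + (u * r - r * u) := by noncomm_ring
    rw [e, hrsq, hru]; abel
  have hsum : S.le 0 ((r + u) + (r - u)) := by
    have e : (r + u) + (r - u) = r + r := by abel
    rw [e]; exact S.add_nonneg' hrm hrm hr0 hr0
  exact S.nonneg_of_mul_eq_zero' (S.A.add_mem hrm hu) (S.A.sub_mem hrm hu) hmul hsum

/-- Key lemma: if `u, v` commute, `u v ≥ 0` and `u + v ≥ 0`, then `u ≥ 0`. -/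
lemma nonneg_of_comm' {u v : R} (hu : u ∈ S.A) (hv : v ∈ S.A)
    (hcom : u * v = v * u) (hprod : S.le 0 (u * v)) (hsum : S.le 0 (u + v)) :
    S.le 0 u := by
  have hrm : S.sqrt (u * u) ∈ S.A := S.abs_mem' hu
  have hr0 : S.le 0 (S.sqrt (u * u)) := S.abs_nn' hu
  have hrsq := S.abs_sq' hu
  have hru := S.abs_comm' hu hu rfl
  have hrv := S.abs_comm' hu hv hcom
  have hw0 : S.le 0 (S.sqrt (u * u) - u) := S.abs_sub_nonneg' hu
  set r := S.sqrt (u * u) with hr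
  set w := r - u with hwdef
  have hwm : w ∈ S.A := S.A.sub_mem hrm hu
  have hwu : w * u = u * w := by
    rw [hwdef, sub_mul, mul_sub, hru]
  have hwv : w * v = v * w := by
    rw [hwdef, sub_mul, mul_sub, hrv, hcom]
  have hkey : w * w = (-2 : ℝ) • (w * u) := by
    have e1 : w * w = r * r - r * u - u * r + u * u := by rw [hwdef]; noncomm_ring
    have e2 : w * u = r * u - u * u := by rw [hwdef]; noncomm_ring
    rw [e1, e2, hrsq, hru, neg_smul, two_smul]
    abel
  have huvm : u * v ∈ S.A := S.mul_mem_comm' hu hv hcom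
  have hw3m : (w * w) * w ∈ S.A := S.quad_mem w hwm w hwm
  have hw3nn : S.le 0 ((w * w) * w) := S.quad_nn w hwm w hwm hw0 hw0
  -- Step 1 : w³ v ≤ 0
  have hq1 := S.quad_nn w hwm (u * v) huvm hw0 hprod
  have E1 : (-2 : ℝ) • (w * (u * v) * w) = ((w * w) * w) * v := by
    calc (-2 : ℝ) • (w * (u * v) * w)
        = (((-2 : ℝ) • (w * u)) * v) * w := by
          simp only [smul_mul_assoc, mul_assoc]
      _ = ((w * w) * v) * w := by rw [← hkey]
      _ = ((w * w) * w) * v := by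
          rw [mul_assoc (w * w) v w, ← hwv, ← mul_assoc]
  have hqm : w * (u * v) * w ∈ S.A := S.quad_mem w hwm (u * v) huvm
  have hw3v_le : S.le (((w * w) * w) * v) 0 := by
    have h2 := S.smul_nonneg 2 (by norm_num) _ hqm hq1
    have e : ((w * w) * w) * v = -((2 : ℝ) • (w * (u * v) * w)) := by
      rw [← E1, ← neg_smul]
    rw [e]
    exact S.neg_nonpos' (S.A.smul_mem _ hqm) h2
  -- Step 2 : w v w ≥ 0
  have h2wu : (2 : ℝ) • (w * u) = -(w * w) := by
    rw [hkey, neg_smul, neg_neg]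
  have hvwm : w * v * w ∈ S.A := S.quad_mem w hwm v hv
  have hsum_m : u + v ∈ S.A := S.A.add_mem hu hv
  have hq2 := S.quad_nn w hwm (u + v) hsum_m hw0 hsum
  have E2 : (2 : ℝ) • (w * (u + v) * w) = (2 : ℝ) • (w * v * w) - (w * w) * w := by
    have e : w * (u + v) * w = (w * u) * w + w * v * w := by noncomm_ring
    rw [e, smul_add, ← smul_mul_assoc, h2wu, neg_mul]
    abel
  have hstep2 : S.le 0 ((2 : ℝ) • (w * v * w) - (w * w) * w) := by
    have h2 := S.smul_nonneg 2 (by norm_num) _ (S.quad_mem w hwm (u + v) hsum_m) hq2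
    rwa [E2] at h2
  have hdm : (2 : ℝ) • (w * v * w) - (w * w) * w ∈ S.A :=
    S.A.sub_mem (S.A.smul_mem _ hvwm) hw3m
  have hwvw_nn : S.le 0 (w * v * w) := by
    have hsum3 : S.le 0 ((2 : ℝ) • (w * v * w)) := by
      have h3 := S.add_nonneg' hdm hw3m hstep2 hw3nn
      rwa [sub_add_cancel] at h3
    have h4 := S.smul_nonneg 2⁻¹ (by norm_num) _ (S.A.smul_mem _ hvwm) hsum3
    rwa [smul_smul, (by norm_num : (2⁻¹ : ℝ) * 2 = 1), one_smul] at h4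
  -- Step 3 : w³ v = 0
  have hcw1 : (w * v) * w = w * (w * v) := comm_mul'' rfl hwv.symm
  have hcw : w * (w * v * w) = (w * v * w) * w := (comm_mul'' hcw1 rfl).symm
  have eA : w * (w * v * w) = ((w * w) * w) * v := by
    simp only [mul_assoc]
    rw [← hwv]
  have hw3v_comm : ((w * w) * w) * v = v * ((w * w) * w) :=
    comm_mul'' (comm_mul'' hwv hwv) hwv
  have hw3vm : ((w * w) * w) * v ∈ S.A := S.mul_mem_comm' hw3m hv hw3v_comm
  have hw3v_nn : S.le 0 (((w * w) * w) * v) := by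
    have h5 := S.mul_nonneg_comm' hwm hvwm hw0 hwvw_nn hcw
    rwa [eA] at h5
  have hw3v_zero : ((w * w) * w) * v = 0 := S.nonneg_antisymm' hw3vm hw3v_nn hw3v_le
  -- Step 4 : w⁵ = 0
  have hq4 := S.quad_nn w hwm _ hdm hw0 hstep2
  have E4 : w * ((2 : ℝ) • (w * v * w) - (w * w) * w) * w = -(w * ((w * w) * w) * w) := by
    have e1 : w * ((2 : ℝ) • (w * v * w) - (w * w) * w) * w
        = (2 : ℝ) • (w * (w * v * w) * w) - w * ((w * w) * w) * w := by
      simp only [mul_sub, sub_mul, smul_mul_assoc, mul_smul_comm, mul_assoc]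
    have e2 : w * (w * v * w) * w = 0 := by
      rw [eA, hw3v_zero, zero_mul]
    rw [e1, e2, smul_zero, zero_sub]
  have hw5_le : S.le (w * ((w * w) * w) * w) 0 := by
    apply S.nonpos_of_neg_nonneg' (S.quad_mem w hwm _ hw3m)
    rwa [E4] at hq4
  have hw5_nn : S.le 0 (w * ((w * w) * w) * w) := S.quad_nn w hwm _ hw3m hw0 hw3nn
  have hw5_zero : w * ((w * w) * w) * w = 0 :=
    S.nonneg_antisymm' (S.quad_mem w hwm _ hw3m) hw5_nn hw5_le
  -- Step 5 : cascade down to w = 0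
  have c1 := (S.quad_zero w hwm ((w * w) * w) hw3m hw3nn hw5_zero).1
  have c1' : w * (w * w) * w = 0 := by rw [mul_assoc]; exact c1
  have c2 := (S.quad_zero w hwm (w * w) (S.sq_mem w hwm) (S.sq_nn w hwm) c1').1
  have c2' : w * w * w = 0 := by rw [mul_assoc]; exact c2
  have c3 := (S.quad_zero w hwm w hwm hw0 c2').1
  have c4' : w * 1 * w = 0 := by rw [mul_one]; exact c3
  have c4 := (S.quad_zero w hwm 1 S.one_mem S.one_nn c4').1
  have hw_eq : w = 0 := by rwa [mul_one] at c4
  rw [hwdef] at hw_eq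
  have hru_eq : r = u := sub_eq_zero.mp hw_eq
  rw [← hru_eq]
  exact hr0

end SynapticAlgebra

end AuxProof

/-- If `a` and `b` commute and `a ≤ b`, then `a⁺ ≤ b⁺`. -/
theorem pospart_le_pospart_of_commute {R : Type*} [Ring R] [Algebra ℝ R]
    (S : SynapticAlgebra R) (a b : R) (ha : a ∈ S.A) (hb : b ∈ S.A)
    (hcomm : a * b = b * a) (hab : S.le a b) :
    S.le (S.pospart a) (S.pospart b) := by
  have hram : S.sqrt (a * a) ∈ S.A := S.abs_mem' ha
  have hrbm : S.sqrt (b * b) ∈ S.A := S.abs_mem' hb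
  have hra0 : S.le 0 (S.sqrt (a * a)) := S.abs_nn' ha
  have hrasq := S.abs_sq' ha
  have hraa := S.abs_comm' ha ha rfl
  have hrab := S.abs_comm' ha hb hcomm
  have hrba := S.abs_comm' hb ha hcomm.symm
  have hrarb : S.sqrt (a * a) * S.sqrt (b * b) = S.sqrt (b * b) * S.sqrt (a * a) :=
    S.abs_comm' ha hrbm (S.abs_comm' hb ha hcomm.symm).symm
  have hrbsb : S.le 0 (S.sqrt (b * b) - b) := S.abs_sub_nonneg' hb
  have hrbpb : S.le 0 (S.sqrt (b * b) + b) := S.abs_add_nonneg' hb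
  have hpam : S.pospart a ∈ S.A := by
    unfold SynapticAlgebra.pospart SynapticAlgebra.absval
    exact S.A.smul_mem _ (S.A.add_mem hram ha)
  have hpbm : S.pospart b ∈ S.A := by
    unfold SynapticAlgebra.pospart SynapticAlgebra.absval
    exact S.A.smul_mem _ (S.A.add_mem hrbm hb)
  set ra := S.sqrt (a * a) with hra
  set rb := S.sqrt (b * b) with hrb
  set y := rb + b - a with hy
  have hym : y ∈ S.A := S.A.sub_mem (S.A.add_mem hrbm hb) ha
  have hya : y * a = a * y := by
    rw [hy, sub_mul, add_mul, mul_sub, mul_add, hrba, hcomm]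
  have hyra : y * ra = ra * y := by
    rw [hy, sub_mul, add_mul, mul_sub, mul_add, hrarb, hrab, hraa]
  have hbma : S.le 0 (b - a) := S.sub_of_le' ha hb hab
  have hyma : S.le 0 (y - a) := by
    have e : y - a = (rb - b) + ((b - a) + (b - a)) := by rw [hy]; abel
    rw [e]
    exact S.add_nonneg' (S.A.sub_mem hrbm hb)
      (S.A.add_mem (S.A.sub_mem hb ha) (S.A.sub_mem hb ha)) hrbsb
      (S.add_nonneg' (S.A.sub_mem hb ha) (S.A.sub_mem hb ha) hbma hbma)
  have hypa : S.le 0 (y + a) := by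
    have e : y + a = rb + b := by rw [hy]; abel
    rw [e]; exact hrbpb
  have hym_a : y - a ∈ S.A := S.A.sub_mem hym ha
  have hyp_a : y + a ∈ S.A := S.A.add_mem hym ha
  have hum : y - ra ∈ S.A := S.A.sub_mem hym hram
  have hvm : y + ra ∈ S.A := S.A.add_mem hym hram
  have huv : (y - ra) * (y + ra) = (y - a) * (y + a) := by
    have e1 : (y - ra) * (y + ra) = y * y + y * ra - ra * y - ra * ra := by noncomm_ring
    have e2 : (y - a) * (y + a) = y * y + y * a - a * y - a * a := by noncomm_ring
    rw [e1, e2, hyra, hya, hrasq]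
    abel
  have hvu : (y + ra) * (y - ra) = (y - a) * (y + a) := by
    have e1 : (y + ra) * (y - ra) = y * y - y * ra + ra * y - ra * ra := by noncomm_ring
    have e2 : (y - a) * (y + a) = y * y + y * a - a * y - a * a := by noncomm_ring
    rw [e1, e2, hyra, hya, hrasq]
    abel
  have huv_comm : (y - ra) * (y + ra) = (y + ra) * (y - ra) := by rw [huv, hvu]
  have hcomm2 : (y - a) * (y + a) = (y + a) * (y - a) := by
    have e2 : (y - a) * (y + a) = y * y + y * a - a * y - a * a := by noncomm_ring
    have e3 : (y + a) * (y - a) = y * y - y * a + a * y - a * a := by noncomm_ring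
    rw [e2, e3, hya]; abel
  have huv_nn : S.le 0 ((y - ra) * (y + ra)) := by
    rw [huv]
    exact S.mul_nonneg_comm' hym_a hyp_a hyma hypa hcomm2
  have husum : S.le 0 ((y - ra) + (y + ra)) := by
    have e : (y - ra) + (y + ra) = (y - a) + (y + a) := by abel
    rw [e]
    exact S.add_nonneg' hym_a hyp_a hyma hypa
  have hfin := S.nonneg_of_comm' hum hvm huv_comm huv_nn husum
  apply S.le_of_sub' hpam hpbm
  have e : S.pospart b - S.pospart a = (2⁻¹ : ℝ) • (y - ra) := by
    rw [hy]
    unfold SynapticAlgebra.pospart SynapticAlgebra.absval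
    rw [← hra, ← hrb, ← smul_sub]
    congr 1
    abel
  rw [e]
  exact S.smul_nonneg 2⁻¹ (by norm_num) _ hum hfin
end
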